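/- For any nonempty index k = (k_1,…,k_r) of positive integers and any positive integer N, Hoffman's duality identity ζ^⋆_{<N}(k^∨) = H_{<N}(k) holds, where k^∨ is the Hoffman dual of k. -/

import Mathlib

/-- Auxiliary recursion: `zetaStarAux M t` sums over `0 < m₁ ≤ ⋯ ≤ m_r < M` where the
exponent list `t` lists the exponents from the *largest* variable downwards. -/
def zetaStarAux : ℕ → List ℕ → ℚ
  | _, [] => 1
  | M, k :: t => ∑ m ∈ Finset.Ioo 0 M, (1 / (m : ℚ) ^ k) * zetaStarAux (m + 1) t

/-- The multiple star harmonic sum `ζ⋆_{<N}(k₁,…,k_r) = ∑_{0<m₁≤⋯≤m_r<N} ∏ᵢ 1/mᵢ^{kᵢ}`. -/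
def zetaStar (N : ℕ) (ks : List ℕ) : ℚ := zetaStarAux N ks.reverse

/-- The multiple sum of Hoffman's type
`H_{<N}(k₁,…,k_r) = ∑_{1≤m₁≤⋯≤m_r<N} ((-1)^{m_r-1}/(m₁^{k₁}⋯m_r^{k_r}))·binom(N-1,m_r)`. -/
def hoffmanSum (N : ℕ) (ks : List ℕ) : ℚ :=
  match ks.reverse with
  | [] => 1
  | k :: t => ∑ m ∈ Finset.Ioo 0 N,
      ((-1 : ℚ) ^ (m - 1) * ((N - 1).choose m : ℚ) / (m : ℚ) ^ k) * zetaStarAux (m + 1) t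

/-- The Hoffman dual `k^∨` of an index `k`: write `k = (1+⋯+1, …, 1+⋯+1)` (with `kᵢ` ones
in the `i`-th group), i.e. encode `k` as a word in `{+, ,}` of length `(weight) - 1`
(`true` = `+`), and exchange the plus signs and the commas. -/
def hoffmanDual (ks : List ℕ) : List ℕ :=
  ((List.intercalate [false] (ks.map fun a => List.replicate (a - 1) true)).map not).splitOn false
    |>.map fun b => b.length + 1

/-! Encode an index as a word in `+` and `,`, read from the innermost summation variable
outwards: `+` divides the current summand `f(m)` by `m`, and `,` replaces it by
`(∑_{j ≤ m} f(j)) / m`. Starting from `1/m`, this produces the summand `t_k(m)` of `ζ⋆_{<N}(k)`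
whose largest variable is `m`, and `H_{<N}(k) = ∑_{m<N} (-1)^{m-1} binom(N-1, m) t_k(m)`.

Let `(T f)(n) = ∑_m (-1)^{m-1} binom(n-1, m-1) f(m)` be the binomial transform and
`(A f)(n) = ∑_m (-1)^{m-1} binom(n, m) f(m)`. Since `binom(n-1, m-1)/m = binom(n, m)/n`, we have
`T(f/m)(n) = (A f)(n)/n`; Pascal's rule gives `(A f)(n) = ∑_{j ≤ n} (T f)(j)`, and the partial
alternating sums of a row of binomial coefficients show that `A` of the partial sums of `f` is
`T f`. Hence `T` turns a `+` step into a `,` step and vice versa, and it fixes `1/m`, so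
`T t_k = t_{k^∨}`. Summing over `n < N` gives the identity. -/

open Finset

def binomialTransform (f : ℕ → ℚ) (n : ℕ) : ℚ :=
  ∑ m ∈ Icc 1 n, (-1) ^ (m - 1) * ((n - 1).choose (m - 1) : ℚ) * f m

def alternatingBinomialSum (f : ℕ → ℚ) (n : ℕ) : ℚ :=
  ∑ m ∈ Icc 1 n, (-1) ^ (m - 1) * (n.choose m : ℚ) * f m

lemma Ioo_zero_eq_Icc_one_sub_one (N : ℕ) : Ioo 0 N = Icc 1 (N - 1) := by
  ext m
  simp only [mem_Ioo, mem_Icc]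
  omega

lemma binomialTransform_div (h : ℕ → ℚ) (n : ℕ) :
    binomialTransform (fun m => h m / m) n = alternatingBinomialSum h n / n := by
  rw [binomialTransform, alternatingBinomialSum, sum_div]
  refine sum_congr rfl fun m hm => ?_
  obtain ⟨m, rfl⟩ : ∃ m', m = m' + 1 := ⟨m - 1, by grind⟩
  obtain ⟨n, rfl⟩ : ∃ n', n = n' + 1 := ⟨n - 1, by grind⟩
  have key : (n.choose m : ℚ) / (m + 1 : ℕ) = ((n + 1).choose (m + 1) : ℚ) / (n + 1 : ℕ) := by
    rw [div_eq_div_iff (by positivity) (by positivity)]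
    exact_mod_cast (mul_comm _ _).trans (Nat.add_one_mul_choose_eq n m)
  simp only [Nat.add_sub_cancel]
  calc _ = (-1) ^ m * h (m + 1) * ((n.choose m : ℚ) / (m + 1 : ℕ)) := by ring
    _ = _ := by rw [key]; ring

lemma alternatingBinomialSum_succ (f : ℕ → ℚ) (n : ℕ) :
    alternatingBinomialSum f (n + 1) = alternatingBinomialSum f n + binomialTransform f (n + 1) := by
  have pascal : ∀ m ∈ Icc 1 (n + 1), (-1 : ℚ) ^ (m - 1) * ((n + 1).choose m : ℚ) * f m =
      (-1) ^ (m - 1) * (n.choose m : ℚ) * f m + (-1) ^ (m - 1) * (n.choose (m - 1) : ℚ) * f m := by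
    intro m hm
    obtain ⟨m, rfl⟩ : ∃ m', m = m' + 1 := ⟨m - 1, by grind⟩
    simp only [Nat.choose_succ_succ', Nat.add_sub_cancel]
    push_cast
    ring
  rw [alternatingBinomialSum, sum_congr rfl pascal, sum_add_distrib, sum_Icc_succ_top (by omega),
    Nat.choose_succ_self]
  simp [alternatingBinomialSum, binomialTransform]

lemma alternatingBinomialSum_eq_sum_binomialTransform (f : ℕ → ℚ) (n : ℕ) :
    alternatingBinomialSum f n = ∑ m ∈ Icc 1 n, binomialTransform f m := by
  induction n with
  | zero => simp [alternatingBinomialSum]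
  | succ n ih => rw [alternatingBinomialSum_succ, ih, sum_Icc_succ_top (by omega)]

lemma sum_Icc_neg_one_pow_mul_choose {n k : ℕ} (hk : k ≤ n) :
    ∑ m ∈ Icc (k + 1) (n + 1), (-1 : ℚ) ^ (m - 1) * ((n + 1).choose m : ℚ) =
      (-1) ^ k * (n.choose k : ℚ) := by
  have partial_sum (j : ℕ) :
      ∑ m ∈ range (j + 1), (-1 : ℚ) ^ m * ((n + 1).choose m : ℚ) = (-1) ^ j * (n.choose j : ℚ) := by
    exact_mod_cast Int.alternating_sum_range_choose_eq_choose
  have sign_shift : ∀ m ∈ Icc (k + 1) (n + 1),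
      (-1 : ℚ) ^ (m - 1) * ((n + 1).choose m : ℚ) = -((-1) ^ m * ((n + 1).choose m : ℚ)) := by
    intro m hm
    obtain ⟨m, rfl⟩ : ∃ m', m = m' + 1 := ⟨m - 1, by grind⟩
    simp [pow_succ]
  have hIcc : Icc (k + 1) (n + 1) = Ico (k + 1) (n + 2) := rfl
  rw [sum_congr rfl sign_shift, sum_neg_distrib, hIcc, sum_Ico_eq_sub _ (by omega), partial_sum,
    partial_sum, Nat.choose_succ_self]
  simp

lemma alternatingBinomialSum_partialSum (f : ℕ → ℚ) (n : ℕ) :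
    alternatingBinomialSum (fun m => ∑ j ∈ Icc 1 m, f j) n = binomialTransform f n := by
  rw [alternatingBinomialSum, binomialTransform]
  simp_rw [mul_sum]
  rw [sum_comm' (t' := Icc 1 n) (s' := fun j => Icc j n) (by intro m j; simp only [mem_Icc]; omega)]
  refine sum_congr rfl fun j hj => ?_
  obtain ⟨j, rfl⟩ : ∃ j', j = j' + 1 := ⟨j - 1, by grind⟩
  obtain ⟨n, rfl⟩ : ∃ n', n = n' + 1 := ⟨n - 1, by grind⟩
  rw [← sum_mul, sum_Icc_neg_one_pow_mul_choose (by grind)]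
  simp

lemma binomialTransform_one_div :
    binomialTransform (fun m : ℕ => 1 / (m : ℚ)) = fun m : ℕ => 1 / (m : ℚ) := by
  funext n
  refine (binomialTransform_div (fun _ => 1) n).trans ?_
  rcases n with _ | n
  · simp
  · have total := sum_Icc_neg_one_pow_mul_choose (Nat.zero_le n)
    simp_all [alternatingBinomialSum]

-- `true` stands for `+` and `false` for `,`, as in `hoffmanDual`.
def wordStep : Bool → (ℕ → ℚ) → ℕ → ℚ
  | true, f, m => f m / m
  | false, f, m => (∑ j ∈ Icc 1 m, f j) / m

lemma binomialTransform_wordStep {f g : ℕ → ℚ} (hfg : binomialTransform f = g) :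
    ∀ b, binomialTransform (wordStep b f) = wordStep (!b) g
  | true => funext fun n => by
      change binomialTransform (fun m => f m / m) n = _
      rw [binomialTransform_div, alternatingBinomialSum_eq_sum_binomialTransform, hfg]
      rfl
  | false => funext fun n => by
      change binomialTransform (fun m => (∑ j ∈ Icc 1 m, f j) / m) n = _
      rw [binomialTransform_div, alternatingBinomialSum_partialSum, hfg]
      rfl

def wordTerm (w : List Bool) : ℕ → ℚ :=
  w.foldl (fun f b => wordStep b f) fun m => 1 / (m : ℚ)

lemma binomialTransform_foldl_wordStep (w : List Bool) {f g : ℕ → ℚ}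
    (hfg : binomialTransform f = g) :
    binomialTransform (w.foldl (fun f b => wordStep b f) f) =
      (w.map not).foldl (fun f b => wordStep b f) g := by
  induction w generalizing f g with
  | nil => exact hfg
  | cons b w ih => exact ih (binomialTransform_wordStep hfg b)

theorem binomialTransform_wordTerm (w : List Bool) :
    binomialTransform (wordTerm w) = wordTerm (w.map not) :=
  binomialTransform_foldl_wordStep w binomialTransform_one_div

lemma List.intercalate_append_singleton {α : Type*} (sep x : List α) {L : List (List α)}
    (hL : L ≠ []) : sep.intercalate (L ++ [x]) = sep.intercalate L ++ sep ++ x := by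
  induction L with
  | nil => exact absurd rfl hL
  | cons a L ih =>
    rcases L with _ | ⟨b, L⟩
    · simp
    · rw [List.cons_append, List.cons_append, List.intercalate_cons_cons, ← List.cons_append,
        ih (List.cons_ne_nil _ _), List.intercalate_cons_cons]
      simp

lemma List.eq_false_of_mem_splitOnP {α : Type*} {p : α → Bool} {xs c : List α} {x : α}
    (hc : c ∈ xs.splitOnP p) (hx : x ∈ c) : p x = false := by
  induction xs generalizing c with
  | nil => simp_all
  | cons a xs ih =>
    rw [List.splitOnP_cons_eq_if_modifyHead] at hc
    split_ifs at hc with ha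
    · rcases List.mem_cons.mp hc with rfl | hc
      · simp at hx
      · exact ih hc hx
    · obtain ⟨d, ds, hds⟩ := List.exists_cons_of_ne_nil (List.splitOnP_ne_nil p xs)
      rw [hds, List.modifyHead_cons] at hc
      rcases List.mem_cons.mp hc with rfl | hc
      · rcases List.mem_cons.mp hx with rfl | hx
        · simpa using ha
        · exact ih (hds ▸ List.mem_cons_self) hx
      · exact ih (hds ▸ List.mem_cons_of_mem _ hc) hx

def indexWord (ks : List ℕ) : List Bool :=
  List.intercalate [false] (ks.map fun a => List.replicate (a - 1) true)

lemma indexWord_singleton (k : ℕ) : indexWord [k] = List.replicate (k - 1) true := by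
  simp [indexWord]

lemma indexWord_append_singleton {l : List ℕ} (hl : l ≠ []) (k : ℕ) :
    indexWord (l ++ [k]) = indexWord l ++ false :: List.replicate (k - 1) true := by
  rw [indexWord, List.map_append, List.map_singleton,
    List.intercalate_append_singleton _ _ (by simpa using hl)]
  simp [indexWord]

lemma indexWord_splitOn (v : List Bool) :
    indexWord ((v.splitOn false).map fun c => c.length + 1) = v := by
  have chunk_eq : ∀ c ∈ v.splitOn false, List.replicate c.length true = c := by
    intro c hc
    rw [List.splitOn_eq_splitOnP] at hc
    refine (List.eq_replicate_iff.mpr ⟨rfl, fun b hb => ?_⟩).symm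
    simpa using List.eq_false_of_mem_splitOnP hc hb
  simp only [indexWord, List.map_map, Function.comp_def, Nat.add_sub_cancel]
  rw [List.map_congr_left chunk_eq, List.map_id']
  exact List.intercalate_splitOn false

lemma indexWord_hoffmanDual (ks : List ℕ) : indexWord (hoffmanDual ks) = (indexWord ks).map not :=
  indexWord_splitOn _

lemma hoffmanDual_ne_nil (ks : List ℕ) : hoffmanDual ks ≠ [] := by
  simp [hoffmanDual, List.splitOn_ne_nil]

lemma pos_of_mem_hoffmanDual {ks : List ℕ} {a : ℕ} (ha : a ∈ hoffmanDual ks) : 0 < a := by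
  obtain ⟨c, -, rfl⟩ := List.mem_map.mp ha
  exact Nat.succ_pos _

lemma zetaStar_append_singleton (N : ℕ) (l : List ℕ) (k : ℕ) :
    zetaStar N (l ++ [k]) = ∑ m ∈ Ioo 0 N, zetaStar (m + 1) l / (m : ℚ) ^ k := by
  simp [zetaStar, zetaStarAux, div_eq_inv_mul]

lemma hoffmanSum_append_singleton (N : ℕ) (l : List ℕ) (k : ℕ) :
    hoffmanSum N (l ++ [k]) = ∑ m ∈ Ioo 0 N,
      (-1 : ℚ) ^ (m - 1) * ((N - 1).choose m : ℚ) * (zetaStar (m + 1) l / (m : ℚ) ^ k) := by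
  simp only [hoffmanSum, List.reverse_append, List.reverse_singleton, List.singleton_append]
  refine sum_congr rfl fun m _ => ?_
  rw [zetaStar]
  ring

lemma foldl_wordStep_replicate_true (j : ℕ) (f : ℕ → ℚ) (m : ℕ) :
    (List.replicate j true).foldl (fun f b => wordStep b f) f m = f m / (m : ℚ) ^ j := by
  induction j generalizing f with
  | zero => simp
  | succ j ih =>
    rw [List.replicate_succ, List.foldl_cons, ih, pow_succ]
    simp only [wordStep]
    ring

lemma wordTerm_indexWord_append_singleton {l : List ℕ} (hl : ∀ a ∈ l, 0 < a) {k : ℕ}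
    (hk : 0 < k) (m : ℕ) :
    wordTerm (indexWord (l ++ [k])) m = zetaStar (m + 1) l / (m : ℚ) ^ k := by
  induction l using List.reverseRecOn generalizing k m with
  | nil =>
    rw [List.nil_append, indexWord_singleton, wordTerm, foldl_wordStep_replicate_true,
      zetaStar, List.reverse_nil, zetaStarAux, div_div, ← pow_succ', Nat.sub_add_cancel hk]
  | append_singleton l a ih =>
    have hl' : ∀ b ∈ l, 0 < b := fun b hb => hl b (by simp [hb])
    rw [indexWord_append_singleton (by simp), List.append_cons, wordTerm, List.foldl_append,
      foldl_wordStep_replicate_true, List.foldl_append, List.foldl_cons, List.foldl_nil]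
    change (∑ j ∈ Icc 1 m, wordTerm (indexWord (l ++ [a])) j) / m / (m : ℚ) ^ (k - 1) = _
    rw [zetaStar_append_singleton, Ioo_zero_eq_Icc_one_sub_one, Nat.add_sub_cancel, div_div,
      ← pow_succ', Nat.sub_add_cancel hk]
    simp_rw [ih hl' (hl a (by simp))]

lemma zetaStar_eq_sum_wordTerm {l : List ℕ} (hl : l ≠ []) (hpos : ∀ a ∈ l, 0 < a) (N : ℕ) :
    zetaStar N l = ∑ m ∈ Ioo 0 N, wordTerm (indexWord l) m := by
  cases l using List.reverseRecOn with
  | nil => exact absurd rfl hl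
  | append_singleton l k =>
    rw [zetaStar_append_singleton]
    refine sum_congr rfl fun m _ => ?_
    rw [wordTerm_indexWord_append_singleton (fun a ha => hpos a (by simp [ha])) (hpos k (by simp))]

lemma hoffmanSum_eq_alternatingBinomialSum {l : List ℕ} (hl : l ≠ []) (hpos : ∀ a ∈ l, 0 < a)
    (N : ℕ) : hoffmanSum N l = alternatingBinomialSum (wordTerm (indexWord l)) (N - 1) := by
  cases l using List.reverseRecOn with
  | nil => exact absurd rfl hl
  | append_singleton l k =>
    rw [hoffmanSum_append_singleton, alternatingBinomialSum, Ioo_zero_eq_Icc_one_sub_one]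
    refine sum_congr rfl fun m _ => ?_
    rw [wordTerm_indexWord_append_singleton (fun a ha => hpos a (by simp [ha])) (hpos k (by simp))]

theorem hoffman_duality_general (N : ℕ) (ks : List ℕ) (hne : ks ≠ [])
    (hks : ∀ a ∈ ks, 0 < a) :
    zetaStar N (hoffmanDual ks) = hoffmanSum N ks := by
  rw [zetaStar_eq_sum_wordTerm (hoffmanDual_ne_nil ks) (fun _ => pos_of_mem_hoffmanDual),
    indexWord_hoffmanDual, ← binomialTransform_wordTerm, hoffmanSum_eq_alternatingBinomialSum hne hks,
    alternatingBinomialSum_eq_sum_binomialTransform, Ioo_zero_eq_Icc_one_sub_one]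

/-- Hoffman's duality identity (Theorem 4.1): `ζ⋆_{<N}(k^∨) = H_{<N}(k)` for every
nonempty index `k` and `N > 0`. -/
theorem hoffman_duality (N : ℕ) (hN : 0 < N) (ks : List ℕ) (hne : ks ≠ [])
    (hks : ∀ a ∈ ks, 0 < a) :
    zetaStar N (hoffmanDual ks) = hoffmanSum N ks :=
  hoffman_duality_general N ks hne hks
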